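/- arXiv:2304.05318 — 4 statements merged into one kernel-verified Lean document; each statement's English description precedes it below -/
import Mathlib

section
/- If (T1, T2) is an ordered pair of triangulations of a convex n-gon that share no diagonal, and (T1', T2') is obtained from (T1, T2) by a flip operation (flip a diagonal in one triangulation, and if the resulting diagonal lies in the other triangulation, flip it there too), then T1' and T2' also share no diagonal. -/
/-!
A flip creates only one new diagonal. Two distinct new diagonals `e₁, e₂` of `T'` would both cross
the flipped diagonal `d`, and some chord `g` from an endpoint of `d` to an endpoint of one of them,
say `e₂`, crosses the other. Every chord crossing `g` crosses `d` or `e₂`; no diagonal of `T` other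
than `d` does, and `d` shares an endpoint with `g`. So `g` lies in `T` by maximality, hence in `T'`,
where it crosses `e₁`.

A pair flip therefore trades `d` for the single new diagonal `d'`. If `d'` lies in the other
triangulation it is flipped away there, and its replacement crosses `d'`, so it is not in the first.
-/

/-- A diagonal of the convex `n`-gon: an unordered pair of distinct,
non-adjacent vertices (vertices labeled by `Fin n` in cyclic order). -/
def IsDiag (n : ℕ) (d : Sym2 (Fin n)) : Prop :=
  ∃ a b : Fin n, d = s(a, b) ∧ a ≠ b ∧
    (a.val + 1) % n ≠ b.val ∧ (b.val + 1) % n ≠ a.val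

/-- Two diagonals of the convex `n`-gon cross (their endpoints strictly
interleave around the polygon). -/
def Crosses (n : ℕ) (d e : Sym2 (Fin n)) : Prop :=
  (∃ a b c c' : Fin n, d = s(a, b) ∧ e = s(c, c') ∧ a < c ∧ c < b ∧ b < c') ∨
  (∃ a b c c' : Fin n, e = s(a, b) ∧ d = s(c, c') ∧ a < c ∧ c < b ∧ b < c')

/-- A triangulation of the convex `n`-gon: a maximal set of pairwise
noncrossing diagonals. -/
structure Triangulation (n : ℕ) where
  diags : Finset (Sym2 (Fin n))
  isDiag : ∀ d ∈ diags, IsDiag n d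
  noncross : ∀ d ∈ diags, ∀ e ∈ diags, ¬ Crosses n d e
  maximal : ∀ d, IsDiag n d → (∀ e ∈ diags, ¬ Crosses n d e) → d ∈ diags

/-- `IsFlip T d T'` : the triangulation `T'` is obtained from `T` by flipping
the diagonal `d` (removing `d`, keeping all other diagonals, and inserting the
opposite diagonal of the resulting quadrilateral). -/
def IsFlip {n : ℕ} (T : Triangulation n) (d : Sym2 (Fin n)) (T' : Triangulation n) : Prop :=
  d ∈ T.diags ∧ d ∉ T'.diags ∧ ∀ e ∈ T.diags, e ≠ d → e ∈ T'.diags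

/-- Two triangulations are related by a single diagonal flip. -/
def FlipAdj {n : ℕ} (T T' : Triangulation n) : Prop := ∃ d, IsFlip T d T'

/-- `d'` is the new diagonal created when passing from `T` to `T'`. -/
def NewDiag {n : ℕ} (T T' : Triangulation n) (d' : Sym2 (Fin n)) : Prop :=
  d' ∈ T'.diags ∧ d' ∉ T.diags

/-- Flip of a pair of triangulations at a diagonal of the first coordinate:
flip it there, and if the new diagonal lies in the second triangulation,
flip it there as well. -/
def PairFlipFst {n : ℕ} (p q : Triangulation n × Triangulation n) : Prop :=
  ∃ d T₁' d', IsFlip p.1 d T₁' ∧ NewDiag p.1 T₁' d' ∧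
    ((d' ∉ p.2.diags ∧ q = (T₁', p.2)) ∨
     (d' ∈ p.2.diags ∧ ∃ T₂', IsFlip p.2 d' T₂' ∧ q = (T₁', T₂')))

/-- Flip of a pair of triangulations at a diagonal of the second coordinate. -/
def PairFlipSnd {n : ℕ} (p q : Triangulation n × Triangulation n) : Prop :=
  ∃ d T₂' d', IsFlip p.2 d T₂' ∧ NewDiag p.2 T₂' d' ∧
    ((d' ∉ p.1.diags ∧ q = (p.1, T₂')) ∨
     (d' ∈ p.1.diags ∧ ∃ T₁', IsFlip p.1 d' T₁' ∧ q = (T₁', T₂')))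

/-- The flip operation on ordered pairs of triangulations. -/
def PairFlip {n : ℕ} (p q : Triangulation n × Triangulation n) : Prop :=
  PairFlipFst p q ∨ PairFlipSnd p q

/-- Vertices of the flip graph `D_n`: ordered pairs of triangulations of the
convex `n`-gon sharing no diagonal. -/
def DVert (n : ℕ) := {p : Triangulation n × Triangulation n // Disjoint p.1.diags p.2.diags}

/-- The flip graph `D_n` on ordered pairs of disjoint triangulations. -/
def DGraph (n : ℕ) : SimpleGraph (DVert n) where
  Adj p q := p ≠ q ∧ (PairFlip p.1 q.1 ∨ PairFlip q.1 p.1)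
  symm := ⟨fun _ _ h => ⟨h.1.symm, h.2.symm⟩⟩
  loopless := ⟨fun _ h => h.1 rfl⟩

/-- The flip graph `T_n` on all triangulations of the convex `n`-gon. -/
def TriGraph (n : ℕ) : SimpleGraph (Triangulation n) where
  Adj T T' := T ≠ T' ∧ (FlipAdj T T' ∨ FlipAdj T' T)
  symm := ⟨fun _ _ h => ⟨h.1.symm, h.2.symm⟩⟩
  loopless := ⟨fun _ h => h.1 rfl⟩

/-- Vertices of `T_n(S)`: triangulations disjoint from `S`. -/
def TnSVert (n : ℕ) (S : Triangulation n) := {T : Triangulation n // Disjoint T.diags S.diags}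

/-- The flip graph `T_n(S)` induced on triangulations disjoint from `S`. -/
def TnS (n : ℕ) (S : Triangulation n) : SimpleGraph (TnSVert n S) where
  Adj T T' := T ≠ T' ∧ (FlipAdj T.1 T'.1 ∨ FlipAdj T'.1 T.1)
  symm := ⟨fun _ _ h => ⟨h.1.symm, h.2.symm⟩⟩
  loopless := ⟨fun _ h => h.1 rfl⟩

section

variable {n : ℕ}

theorem crosses_mk_of_lt {a b c c' : Fin n} (h₁ : a < c) (h₂ : c < b) (h₃ : b < c') :
    Crosses n s(a, b) s(c, c') :=
  Or.inl ⟨a, b, c, c', rfl, rfl, h₁, h₂, h₃⟩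

theorem Crosses.symm {d e : Sym2 (Fin n)} (h : Crosses n d e) : Crosses n e d :=
  Or.symm h

theorem Crosses.exists_lt_eq_mk {d e : Sym2 (Fin n)} (h : Crosses n d e) :
    ∃ a b, a < b ∧ d = s(a, b) := by
  rcases h with ⟨a, b, c, c', rfl, -, h₁, h₂, -⟩ | ⟨a, b, c, c', -, rfl, -, h₂, h₃⟩
  exacts [⟨a, b, h₁.trans h₂, rfl⟩, ⟨c, c', h₂.trans h₃, rfl⟩]

theorem crosses_mk_mk_iff {a b u v : Fin n} (huv : u < v) :
    Crosses n s(a, b) s(u, v) ↔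
      (a < u ∧ u < b ∧ b < v) ∨ (b < u ∧ u < a ∧ a < v) ∨
      (u < a ∧ a < v ∧ v < b) ∨ (u < b ∧ b < v ∧ v < a) := by
  constructor
  · rintro (⟨a', b', c, c', hd, he, h₁, h₂, h₃⟩ | ⟨a', b', c, c', he, hd, h₁, h₂, h₃⟩) <;>
      simp only [Sym2.eq_iff] at hd he <;> omega
  · rintro (⟨h₁, h₂, h₃⟩ | ⟨h₁, h₂, h₃⟩ | ⟨h₁, h₂, h₃⟩ | ⟨h₁, h₂, h₃⟩)
    · exact crosses_mk_of_lt h₁ h₂ h₃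
    · exact Sym2.eq_swap ▸ crosses_mk_of_lt h₁ h₂ h₃
    · exact (crosses_mk_of_lt h₁ h₂ h₃).symm
    · exact Sym2.eq_swap ▸ (crosses_mk_of_lt h₁ h₂ h₃).symm

theorem crosses_mk_mk_iff_of_lt {a b u v : Fin n} (hab : a < b) (huv : u < v) :
    Crosses n s(a, b) s(u, v) ↔ (a < u ∧ u < b ∧ b < v) ∨ (u < a ∧ a < v ∧ v < b) := by
  rw [crosses_mk_mk_iff huv]
  omega

theorem not_crosses_of_mem_of_mem {d e : Sym2 (Fin n)} {x : Fin n} (hd : x ∈ d) (he : x ∈ e) :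
    ¬ Crosses n d e := by
  rintro (⟨a, b, c, c', rfl, rfl, h₁, h₂, h₃⟩ | ⟨a, b, c, c', rfl, rfl, h₁, h₂, h₃⟩) <;>
    simp only [Sym2.mem_iff] at hd he <;> omega

theorem Crosses.isDiag {d e : Sym2 (Fin n)} (h : Crosses n d e) : IsDiag n d := by
  obtain ⟨a, b, hab, rfl⟩ := h.exists_lt_eq_mk
  obtain ⟨u, v, huv, rfl⟩ := h.symm.exists_lt_eq_mk
  rw [crosses_mk_mk_iff_of_lt hab huv] at h
  refine ⟨a, b, rfl, hab.ne, ?_, ?_⟩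
  · rw [Nat.mod_eq_of_lt (by omega)]
    omega
  · rcases Nat.lt_or_ge (b.val + 1) n with hb | hb
    · rw [Nat.mod_eq_of_lt hb]
      omega
    · rw [show b.val + 1 = n by omega, Nat.mod_self]
      omega

/-- `s(a, x)` is a side of the triangle spanned by `a`, `x` and the crossing point of `d` and `e`;
a chord entering the triangle through that side leaves it through `d` or `e`. -/
theorem Crosses.crosses_or_crosses_of_crosses_mk {d e f : Sym2 (Fin n)} {a x : Fin n}
    (hde : Crosses n d e) (ha : a ∈ d) (hx : x ∈ e) (hf : Crosses n s(a, x) f) :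
    Crosses n d f ∨ Crosses n e f := by
  obtain ⟨b₁, b₂, hb, rfl⟩ := hde.exists_lt_eq_mk
  obtain ⟨c₁, c₂, hc, rfl⟩ := hde.symm.exists_lt_eq_mk
  obtain ⟨u, v, huv, rfl⟩ := hf.symm.exists_lt_eq_mk
  rw [crosses_mk_mk_iff_of_lt hb hc] at hde
  rw [crosses_mk_mk_iff huv] at hf
  rw [crosses_mk_mk_iff_of_lt hb huv, crosses_mk_mk_iff_of_lt hc huv]
  rw [Sym2.mem_iff] at ha hx
  rcases ha with rfl | rfl <;> rcases hx with rfl | rfl <;> omega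

theorem exists_mem_crosses_mk_of_crosses_of_crosses {d e₁ e₂ : Sym2 (Fin n)}
    (h₁ : Crosses n d e₁) (h₂ : Crosses n d e₂) (hne : e₁ ≠ e₂) :
    ∃ a ∈ d, ∃ x, (x ∈ e₂ ∧ Crosses n s(a, x) e₁) ∨ (x ∈ e₁ ∧ Crosses n s(a, x) e₂) := by
  obtain ⟨a, b, hab, rfl⟩ := h₁.exists_lt_eq_mk
  obtain ⟨p₁, p₂, hp, rfl⟩ := h₁.symm.exists_lt_eq_mk
  obtain ⟨q₁, q₂, hq, rfl⟩ := h₂.symm.exists_lt_eq_mk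
  rw [crosses_mk_mk_iff_of_lt hab hp] at h₁
  rw [crosses_mk_mk_iff_of_lt hab hq] at h₂
  have hpq : p₁ ≠ q₁ ∨ p₂ ≠ q₂ := by
    contrapose! hne
    rw [hne.1, hne.2]
  refine ⟨a, Sym2.mem_mk_left a b, ?_⟩
  -- As `e₁ ≠ e₂`, one of them has an endpoint `x` separated from `a` by the other one.
  rcases h₁ with h₁ | h₁ <;> rcases h₂ with h₂ | h₂ <;>
    rcases hpq with h | h <;> rcases lt_or_gt_of_ne h with h | h <;>
    first
    | exact ⟨q₁, .inl ⟨Sym2.mem_mk_left _ _, (crosses_mk_mk_iff hp).2 (by omega)⟩⟩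
    | exact ⟨q₂, .inl ⟨Sym2.mem_mk_right _ _, (crosses_mk_mk_iff hp).2 (by omega)⟩⟩
    | exact ⟨p₁, .inr ⟨Sym2.mem_mk_left _ _, (crosses_mk_mk_iff hq).2 (by omega)⟩⟩
    | exact ⟨p₂, .inr ⟨Sym2.mem_mk_right _ _, (crosses_mk_mk_iff hq).2 (by omega)⟩⟩

theorem Triangulation.exists_crosses_of_not_mem (T : Triangulation n) {d : Sym2 (Fin n)}
    (hd : IsDiag n d) (hdT : d ∉ T.diags) : ∃ e ∈ T.diags, Crosses n d e := by
  by_contra! h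
  exact hdT (T.maximal d hd h)

namespace IsFlip

variable {T T' : Triangulation n} {d : Sym2 (Fin n)}

theorem crosses_of_mem_of_not_mem (hf : IsFlip T d T') {e : Sym2 (Fin n)}
    (he' : e ∈ T'.diags) (he : e ∉ T.diags) : Crosses n e d := by
  obtain ⟨f, hfT, hef⟩ := T.exists_crosses_of_not_mem (T'.isDiag e he') he
  obtain rfl | hfd := eq_or_ne f d
  · exact hef
  · exact absurd hef (T'.noncross e he' f (hf.2.2 f hfT hfd))

theorem not_crosses_mk (hf : IsFlip T d T') {e₁ e₂ : Sym2 (Fin n)} {a x : Fin n}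
    (h₁' : e₁ ∈ T'.diags) (h₂' : e₂ ∈ T'.diags) (h₂ : e₂ ∉ T.diags) (ha : a ∈ d) (hx : x ∈ e₂) :
    ¬ Crosses n s(a, x) e₁ := by
  intro hg
  have hde : Crosses n d e₂ := (hf.crosses_of_mem_of_not_mem h₂' h₂).symm
  have hgd : s(a, x) ≠ d := fun h =>
    not_crosses_of_mem_of_mem (h ▸ Sym2.mem_mk_right a x) hx hde
  have hgT : s(a, x) ∉ T.diags := fun hgT =>
    T'.noncross _ (hf.2.2 _ hgT hgd) e₁ h₁' hg
  obtain ⟨f, hfT, hgf⟩ := T.exists_crosses_of_not_mem hg.isDiag hgT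
  have hfd : f ≠ d := by
    rintro rfl
    exact not_crosses_of_mem_of_mem (Sym2.mem_mk_left a x) ha hgf
  rcases hde.crosses_or_crosses_of_crosses_mk ha hx hgf with hdf | hef
  · exact T.noncross d hf.1 f hfT hdf
  · exact T'.noncross e₂ h₂' f (hf.2.2 f hfT hfd) hef

theorem eq_of_newDiag (hf : IsFlip T d T') {e₁ e₂ : Sym2 (Fin n)}
    (h₁ : NewDiag T T' e₁) (h₂ : NewDiag T T' e₂) : e₁ = e₂ := by
  by_contra hne
  obtain ⟨a, ha, x, ⟨hx, hc⟩ | ⟨hx, hc⟩⟩ := exists_mem_crosses_mk_of_crosses_of_crosses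
    (hf.crosses_of_mem_of_not_mem h₁.1 h₁.2).symm (hf.crosses_of_mem_of_not_mem h₂.1 h₂.2).symm hne
  · exact hf.not_crosses_mk h₁.1 h₂.1 h₂.2 ha hx hc
  · exact hf.not_crosses_mk h₂.1 h₁.1 h₁.2 ha hx hc

theorem mem_or_eq_of_mem (hf : IsFlip T d T') {d' e : Sym2 (Fin n)} (hd' : NewDiag T T' d')
    (he : e ∈ T'.diags) : e ∈ T.diags ∨ e = d' := by
  by_cases heT : e ∈ T.diags
  · exact .inl heT
  · exact .inr (hf.eq_of_newDiag ⟨he, heT⟩ hd')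

end IsFlip

section PairFlip

variable {T₁ T₂ T₁' : Triangulation n} {d d' : Sym2 (Fin n)}

theorem IsFlip.disjoint_of_not_mem (hf : IsFlip T₁ d T₁') (hd' : NewDiag T₁ T₁' d')
    (hdisj : Disjoint T₁.diags T₂.diags) (h : d' ∉ T₂.diags) : Disjoint T₁'.diags T₂.diags := by
  rw [Finset.disjoint_left]
  intro e he₁ he₂
  rcases hf.mem_or_eq_of_mem hd' he₁ with heT | rfl
  · exact Finset.disjoint_left.mp hdisj heT he₂
  · exact h he₂

theorem IsFlip.disjoint_of_isFlip (hf : IsFlip T₁ d T₁') (hd' : NewDiag T₁ T₁' d')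
    (hdisj : Disjoint T₁.diags T₂.diags) {T₂' : Triangulation n} (hf₂ : IsFlip T₂ d' T₂') :
    Disjoint T₁'.diags T₂'.diags := by
  rw [Finset.disjoint_left]
  intro e he₁ he₂
  rcases hf.mem_or_eq_of_mem hd' he₁ with heT | rfl
  · by_cases heT₂ : e ∈ T₂.diags
    · exact Finset.disjoint_left.mp hdisj heT heT₂
    · exact T₁'.noncross e he₁ _ hd'.1 (hf₂.crosses_of_mem_of_not_mem he₂ heT₂)
  · exact hf₂.2.1 he₂

end PairFlip

theorem PairFlipFst.disjoint {p q : Triangulation n × Triangulation n} (h : PairFlipFst p q)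
    (hdisj : Disjoint p.1.diags p.2.diags) : Disjoint q.1.diags q.2.diags := by
  obtain ⟨d, T₁', d', hf, hd', ⟨hd'₂, rfl⟩ | ⟨-, T₂', hf₂, rfl⟩⟩ := h
  exacts [hf.disjoint_of_not_mem hd' hdisj hd'₂, hf.disjoint_of_isFlip hd' hdisj hf₂]

theorem PairFlipSnd.swap {p q : Triangulation n × Triangulation n} (h : PairFlipSnd p q) :
    PairFlipFst p.swap q.swap := by
  obtain ⟨d, T₂', d', hf, hd', ⟨hd'₁, rfl⟩ | ⟨hd'₁, T₁', hf₁, rfl⟩⟩ := h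
  exacts [⟨d, T₂', d', hf, hd', .inl ⟨hd'₁, rfl⟩⟩, ⟨d, T₂', d', hf, hd', .inr ⟨hd'₁, T₁', hf₁, rfl⟩⟩]

end

theorem pairFlip_preserves_disjoint_general (n : ℕ)
    (p q : Triangulation n × Triangulation n)
    (hdisj : Disjoint p.1.diags p.2.diags) (h : PairFlip p q) :
    Disjoint q.1.diags q.2.diags := by
  rcases h with h | h
  · exact h.disjoint hdisj
  · exact (h.swap.disjoint hdisj.symm).symm

/-- If `(T1, T2)` is an ordered pair of triangulations of a
convex `n`-gon sharing no diagonal, and `(T1', T2')` is obtained from it by a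
flip, then `T1'` and `T2'` also share no diagonal. -/
theorem pairFlip_preserves_disjoint (n : ℕ) (hn : 4 ≤ n)
    (p q : Triangulation n × Triangulation n)
    (hdisj : Disjoint p.1.diags p.2.diags) (h : PairFlip p q) :
    Disjoint q.1.diags q.2.diags :=
  pairFlip_preserves_disjoint_general n p q hdisj h
end

section
/- For n ≥ 5, in the flip graph D_n on pairs of disjoint triangulations of an n-gon, flipping at a diagonal (a,b) of T1 and flipping at a diagonal (c,d) of T2 cannot produce the same resulting pair (T1', T2'); otherwise both triangulations T1 and T2 would contain the quadrilateral (a,c,b,d) and hence share a diagonal, a contradiction. -/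
/-!
If both pair flips give the same pair, the first triangulation was flipped at the same diagonal
`d` in both, creating a diagonal `d'` of `T₂`, and flipping `d'` in `T₂` creates `d` again.
A newly created diagonal crosses the flipped one, so `d` and `d'` cross, with endpoints
`A < C < B < C'`; every other diagonal of `T₁ ∪ T₂` crosses neither of them, hence crosses no
side of the quadrilateral `A C B C'`. By maximality a side that is a diagonal would then lie in
both triangulations, so all four sides are edges of the polygon and `n = 4`.
-/

section

variable {n : ℕ}

theorem crosses_iff_inf_sup {d e : Sym2 (Fin n)} :
    Crosses n d e ↔
      (d.inf < e.inf ∧ e.inf < d.sup ∧ d.sup < e.sup) ∨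
      (e.inf < d.inf ∧ d.inf < e.sup ∧ e.sup < d.sup) := by
  constructor
  · rintro (⟨a, b, c, c', rfl, rfl, h₁, h₂, h₃⟩ | ⟨a, b, c, c', rfl, rfl, h₁, h₂, h₃⟩) <;>
      simp only [Sym2.inf_mk, Sym2.sup_mk, Fin.lt_def, Fin.coe_min, Fin.coe_max] <;> omega
  · have hd : s(d.inf, d.sup) = d := Sym2.sortEquiv.symm_apply_apply d
    have he : s(e.inf, e.sup) = e := Sym2.sortEquiv.symm_apply_apply e
    rintro (⟨h₁, h₂, h₃⟩ | ⟨h₁, h₂, h₃⟩)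
    · exact Or.inl ⟨_, _, _, _, hd.symm, he.symm, h₁, h₂, h₃⟩
    · exact Or.inr ⟨_, _, _, _, he.symm, hd.symm, h₁, h₂, h₃⟩

theorem not_crosses_quad_sides {A C B C' : Fin n} (hAC : A < C) (hCB : C < B) (hBC' : B < C')
    {f : Sym2 (Fin n)}
    (hf : f = s(A, B) ∨ f = s(C, C') ∨ (¬ Crosses n s(A, B) f ∧ ¬ Crosses n s(C, C') f)) :
    ¬ Crosses n s(A, C) f ∧ ¬ Crosses n s(C, B) f ∧ ¬ Crosses n s(B, C') f ∧
      ¬ Crosses n s(A, C') f := by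
  rcases hf with rfl | rfl | hf <;>
    simp only [crosses_iff_inf_sup, Sym2.inf_mk, Sym2.sup_mk, Fin.lt_def, Fin.coe_min,
      Fin.coe_max] at * <;> omega

theorem adjacent_of_not_isDiag {X Y : Fin n} (hXY : X < Y) (h : ¬ IsDiag n s(X, Y)) :
    Y.val = X.val + 1 ∨ (X.val = 0 ∧ Y.val + 1 = n) := by
  by_contra hne
  have hY := Y.isLt
  rw [Fin.lt_def] at hXY
  refine h ⟨X, Y, rfl, Fin.ne_of_lt hXY, ?_, ?_⟩
  · rw [Nat.mod_eq_of_lt (by omega)]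
    omega
  · rcases Nat.lt_or_ge (Y.val + 1) n with hlt | hge
    · rw [Nat.mod_eq_of_lt hlt]
      omega
    · rw [show Y.val + 1 = n by omega, Nat.mod_self]
      omega

namespace Triangulation

variable {T₁ T₂ : Triangulation n}

theorem not_isDiag_of_disjoint (hdisj : Disjoint T₁.diags T₂.diags) {e : Sym2 (Fin n)}
    (h : ∀ f ∈ T₁.diags ∪ T₂.diags, ¬ Crosses n e f) : ¬ IsDiag n e := fun he =>
  Finset.disjoint_left.mp hdisj
    (T₁.maximal e he fun f hf => h f (Finset.mem_union_left _ hf))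
    (T₂.maximal e he fun f hf => h f (Finset.mem_union_right _ hf))

theorem eq_four_of_quad (hdisj : Disjoint T₁.diags T₂.diags) {A C B C' : Fin n}
    (hAC : A < C) (hCB : C < B) (hBC' : B < C')
    (h : ∀ f ∈ T₁.diags ∪ T₂.diags,
      f = s(A, B) ∨ f = s(C, C') ∨ (¬ Crosses n s(A, B) f ∧ ¬ Crosses n s(C, C') f)) :
    n = 4 := by
  have side {X Y : Fin n} (hXY : X < Y)
      (hX : ∀ f ∈ T₁.diags ∪ T₂.diags, ¬ Crosses n s(X, Y) f) :=
    adjacent_of_not_isDiag hXY (not_isDiag_of_disjoint hdisj hX)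
  have hsides f (hf : f ∈ T₁.diags ∪ T₂.diags) := not_crosses_quad_sides hAC hCB hBC' (h f hf)
  have hAC' := side hAC fun f hf => (hsides f hf).1
  have hCB' := side hCB fun f hf => (hsides f hf).2.1
  have hBC'' := side hBC' fun f hf => (hsides f hf).2.2.1
  have hAC'' := side (hAC.trans (hCB.trans hBC')) fun f hf => (hsides f hf).2.2.2
  have := C'.isLt
  omega

end Triangulation

namespace IsFlip

variable {T T' : Triangulation n} {d d' e f : Sym2 (Fin n)}

theorem ne (h : IsFlip T d T') : T' ≠ T := fun heq => h.2.1 (heq ▸ h.1)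

theorem eq_of_isFlip (h : IsFlip T d T') (h' : IsFlip T d' T') : d = d' := by
  by_contra hne
  exact h.2.1 (h'.2.2 d h.1 hne)

theorem crosses_of_newDiag (h : IsFlip T d T') (he : NewDiag T T' e) : Crosses n e d := by
  by_contra hnc
  refine he.2 (T.maximal e (T'.isDiag e he.1) fun f hf => ?_)
  by_cases hfd : f = d
  · exact hfd ▸ hnc
  · exact T'.noncross e he.1 f (h.2.2 f hf hfd)

theorem eq_or_not_crosses (h : IsFlip T d T') (he : e ∈ T'.diags) (hf : f ∈ T.diags) :
    f = d ∨ (¬ Crosses n d f ∧ ¬ Crosses n e f) := by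
  by_cases hfd : f = d
  · exact Or.inl hfd
  · exact Or.inr ⟨T.noncross d h.1 f hf, T'.noncross e he f (h.2.2 f hf hfd)⟩

end IsFlip

theorem eq_four_of_flip_exchange {T₁ T₂ T₁' T₂' : Triangulation n} {d d' : Sym2 (Fin n)}
    (hdisj : Disjoint T₁.diags T₂.diags) (h₁ : IsFlip T₁ d T₁') (hd' : d' ∈ T₁'.diags)
    (h₂ : IsFlip T₂ d' T₂') (hd : d ∈ T₂'.diags) : n = 4 := by
  have hcompat : ∀ f ∈ T₁.diags ∪ T₂.diags,
      f = d ∨ f = d' ∨ (¬ Crosses n d f ∧ ¬ Crosses n d' f) := by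
    intro f hf
    rcases Finset.mem_union.1 hf with hf | hf
    · have := h₁.eq_or_not_crosses hd' hf
      tauto
    · have := h₂.eq_or_not_crosses hd hf
      tauto
  have hd₂ : d ∉ T₂.diags := Finset.disjoint_left.mp hdisj h₁.1
  rcases h₂.crosses_of_newDiag ⟨hd, hd₂⟩ with
    ⟨A, B, C, C', rfl, rfl, hAC, hCB, hBC'⟩ | ⟨A, B, C, C', rfl, rfl, hAC, hCB, hBC'⟩
  · exact Triangulation.eq_four_of_quad hdisj hAC hCB hBC' hcompat
  · refine Triangulation.eq_four_of_quad hdisj hAC hCB hBC' fun f hf => ?_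
    have := hcompat f hf
    tauto

variable {p q : Triangulation n × Triangulation n}

theorem PairFlipFst.fst_ne (h : PairFlipFst p q) : q.1 ≠ p.1 := by
  obtain ⟨d, T₁', d', hflip, -, ⟨-, rfl⟩ | ⟨-, T₂', -, rfl⟩⟩ := h <;> exact hflip.ne

theorem PairFlipSnd.snd_ne (h : PairFlipSnd p q) : q.2 ≠ p.2 := by
  obtain ⟨d, T₂', d', hflip, -, ⟨-, rfl⟩ | ⟨-, T₁', -, rfl⟩⟩ := h <;> exact hflip.ne

theorem PairFlipFst.exists_of_snd_ne (h : PairFlipFst p q) (hq : q.2 ≠ p.2) :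
    ∃ d d', IsFlip p.1 d q.1 ∧ d' ∈ q.1.diags ∧ IsFlip p.2 d' q.2 := by
  obtain ⟨d, T₁', d', hflip, hnew, ⟨-, rfl⟩ | ⟨-, T₂', hflip', rfl⟩⟩ := h
  · exact absurd rfl hq
  · exact ⟨d, d', hflip, hnew.1, hflip'⟩

theorem PairFlipSnd.exists_of_fst_ne (h : PairFlipSnd p q) (hq : q.1 ≠ p.1) :
    ∃ d d', IsFlip p.2 d q.2 ∧ d' ∈ q.2.diags ∧ IsFlip p.1 d' q.1 := by
  obtain ⟨d, T₂', d', hflip, hnew, ⟨-, rfl⟩ | ⟨-, T₁', hflip', rfl⟩⟩ := h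
  · exact absurd rfl hq
  · exact ⟨d, d', hflip, hnew.1, hflip'⟩

end

/-- For `n ≥ 5`, flipping a pair of disjoint triangulations at
a diagonal of the first triangulation and flipping it at a diagonal of the
second triangulation can never produce the same resulting pair. -/
theorem pairFlipFst_ne_pairFlipSnd (n : ℕ) (hn : 5 ≤ n)
    (p q q' : Triangulation n × Triangulation n)
    (hdisj : Disjoint p.1.diags p.2.diags)
    (h1 : PairFlipFst p q) (h2 : PairFlipSnd p q') :
    q ≠ q' := by
  rintro rfl
  obtain ⟨d, d', hflip₁, hd', hflip₂⟩ := h1.exists_of_snd_ne h2.snd_ne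
  obtain ⟨-, e, -, he, hflip₁'⟩ := h2.exists_of_fst_ne h1.fst_ne
  obtain rfl := hflip₁'.eq_of_isFlip hflip₁
  have := eq_four_of_flip_exchange hdisj hflip₁ hd' hflip₂ he
  omega
end

section
/- For any n ≥ 2, there is a bijection between planar layouts of irreducible planar tanglegrams of size n and ordered pairs of triangulations of a convex (n+1)-gon that share no diagonal. -/
/-- A rooted plane binary tree (leaves unlabeled; children ordered). -/
inductive PTree : Type
  | leaf : PTree
  | node : PTree → PTree → PTree

/-- Number of leaves of a plane binary tree. -/
def PTree.leaves : PTree → ℕ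
  | .leaf => 1
  | .node l r => l.leaves + r.leaves

/-- The set of diagonals of the plane dual triangulation of a plane binary
tree whose leaves occupy positions `a, a+1, …, a + leaves - 1`: the subtree
spanning leaf positions `[b, c)` contributes the diagonal `(b, c)` of the
polygon whenever it is a proper subtree with at least two leaves. -/
def PTree.dualAux : PTree → ℕ → Finset (Sym2 ℕ)
  | .leaf, _ => ∅
  | .node l r, a =>
      l.dualAux a ∪ r.dualAux (a + l.leaves) ∪
        (if 2 ≤ l.leaves then {s(a, a + l.leaves)} else ∅) ∪
        (if 2 ≤ r.leaves then {s(a + l.leaves, a + l.leaves + r.leaves)} else ∅)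

/-- The plane dual triangulation of a plane binary tree `P` with `k` leaves,
as the set of diagonals of a convex `(k+1)`-gon with vertices `0, 1, …, k`
(the standard Catalan bijection). -/
def PTree.dual (P : PTree) : Finset (Sym2 ℕ) := P.dualAux 0

/-- The rotation relation on plane binary trees: `Rot P P'` holds when `P'`
is obtained from `P` by a single rotation at a (necessarily non-root,
internal) vertex. -/
inductive Rot : PTree → PTree → Prop
  | base (P₁ P₂ P₃ : PTree) :
      Rot (.node (.node P₁ P₂) P₃) (.node P₁ (.node P₂ P₃))
  | base' (P₁ P₂ P₃ : PTree) :
      Rot (.node P₁ (.node P₂ P₃)) (.node (.node P₁ P₂) P₃)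
  | left {L L' : PTree} (R : PTree) : Rot L L' → Rot (.node L R) (.node L' R)
  | right (L : PTree) {R R' : PTree} : Rot R R' → Rot (.node L R) (.node L R')

/-- `SubAt P a u` : `u` is a subtree of `P` whose leaves occupy the positions
`a, a+1, …, a + u.leaves - 1` among the leaves of `P` (left to right). -/
inductive SubAt : PTree → ℕ → PTree → Prop
  | refl (t : PTree) : SubAt t 0 t
  | left {l u : PTree} {a : ℕ} (r : PTree) : SubAt l a u → SubAt (.node l r) a u
  | right (l : PTree) {r u : PTree} {a : ℕ} :
      SubAt r a u → SubAt (.node l r) (l.leaves + a) u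

/-- A planar layout, given by its pair of plane binary trees (the matching
joins the leaves in equal positions), has a proper subtanglegram iff both
trees have a subtree with at least `2` leaves occupying the same proper
interval of leaf positions. `IrredLayout` says there is no such pair, i.e.
the layout is a layout of an irreducible tanglegram. -/
def IrredLayout (p : PTree × PTree) : Prop :=
  ¬ ∃ (a : ℕ) (u v : PTree), SubAt p.1 a u ∧ SubAt p.2 a v ∧
      u.leaves = v.leaves ∧ 2 ≤ u.leaves ∧ u.leaves < p.1.leaves

/-- Crossing of the chords `(x, y)` and `(x', y')` of a convex polygon with vertices
`0, 1, 2, …` in cyclic order, for `x < y` and `x' < y'`. -/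
def ChordsCross (x y x' y' : ℕ) : Prop :=
  x < x' ∧ x' < y ∧ y < y' ∨ x' < x ∧ x < y' ∧ y' < y

/-- `F x y` reads as "the interval of leaf positions `[x, y)` belongs to `F`"; the chords
`(x, y)` of such a family are pairwise noncrossing exactly when the intervals are pairwise
nested or disjoint. -/
structure IsMaximalLaminar (k : ℕ) (F : ℕ → ℕ → Prop) : Prop where
  bounds : ∀ x y, F x y → x + 2 ≤ y ∧ y ≤ k
  noncross : ∀ x y x' y', F x y → F x' y' → ¬ ChordsCross x y x' y'
  maximal : ∀ x y, x + 2 ≤ y → y ≤ k → (∀ x' y', F x' y' → ¬ ChordsCross x y x' y') → F x y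

namespace PTree

theorem one_le_leaves (P : PTree) : 1 ≤ P.leaves := by
  induction P with
  | leaf => exact le_rfl
  | node l r _ _ => simp only [leaves]; omega

end PTree

namespace SubAt

theorem add_leaves_le {P u : PTree} {a : ℕ} (h : SubAt P a u) : a + u.leaves ≤ P.leaves := by
  induction h with
  | refl => omega
  | left r _ _ => simp only [PTree.leaves]; have := r.one_le_leaves; omega
  | right _ _ _ => simp only [PTree.leaves]; omega

theorem nested_or_disjoint {P u v : PTree} {a b : ℕ} (hu : SubAt P a u) (hv : SubAt P b v) :
    a + u.leaves ≤ b ∨ b + v.leaves ≤ a ∨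
      (a ≤ b ∧ b + v.leaves ≤ a + u.leaves) ∨ (b ≤ a ∧ a + u.leaves ≤ b + v.leaves) := by
  induction hu generalizing b v with
  | refl => have := hv.add_leaves_le; omega
  | left r hu ih =>
    cases hv with
    | refl => have := (hu.left r).add_leaves_le; omega
    | left _ hv => exact ih hv
    | right _ _ => have := hu.add_leaves_le; omega
  | right l hu ih =>
    cases hv with
    | refl => have := (hu.right l).add_leaves_le; omega
    | left _ hv => have := hv.add_leaves_le; omega
    | right _ hv => have := ih hv; omega

end SubAt

namespace PTree

def Span (P : PTree) (x y : ℕ) : Prop :=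
  ∃ u, SubAt P x u ∧ y = x + u.leaves ∧ 2 ≤ u.leaves

variable {P l r : PTree} {x y x' y' : ℕ}

theorem Span.bounds (h : P.Span x y) : x + 2 ≤ y ∧ y ≤ P.leaves := by
  obtain ⟨u, hu, rfl, h2⟩ := h
  have := hu.add_leaves_le
  omega

theorem Span.not_cross (h : P.Span x y) (h' : P.Span x' y') : ¬ ChordsCross x y x' y' := by
  obtain ⟨u, hu, rfl, -⟩ := h
  obtain ⟨u', hu', rfl, -⟩ := h'
  have := hu.nested_or_disjoint hu'
  unfold ChordsCross
  omega

theorem span_root (h : 2 ≤ P.leaves) : P.Span 0 P.leaves :=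
  ⟨P, .refl P, (zero_add _).symm, h⟩

theorem span_node_iff :
    (node l r).Span x y ↔ (x = 0 ∧ y = l.leaves + r.leaves) ∨ l.Span x y ∨
      (l.leaves ≤ x ∧ r.Span (x - l.leaves) (y - l.leaves)) := by
  have := l.one_le_leaves
  have := r.one_le_leaves
  constructor
  · rintro ⟨u, hu, rfl, h2⟩
    cases hu with
    | refl => exact Or.inl ⟨rfl, zero_add _⟩
    | left _ hu => exact Or.inr (Or.inl ⟨u, hu, rfl, h2⟩)
    | right _ hu => exact Or.inr (Or.inr ⟨by omega, u, by simpa using hu, by omega, h2⟩)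
  · rintro (⟨rfl, rfl⟩ | ⟨u, hu, rfl, h2⟩ | ⟨hx, u, hu, hy, h2⟩)
    · exact span_root (by simp only [leaves]; omega)
    · exact ⟨u, hu.left r, rfl, h2⟩
    · refine ⟨u, ?_, by omega, h2⟩
      simpa [Nat.add_sub_cancel' hx] using hu.right l

theorem span_left_iff : l.Span x y ↔ y ≤ l.leaves ∧ (node l r).Span x y := by
  have := r.one_le_leaves
  rw [span_node_iff]
  constructor
  · intro h
    exact ⟨h.bounds.2, Or.inr (Or.inl h)⟩
  · rintro ⟨hy, ⟨-, rfl⟩ | h | ⟨hx, h⟩⟩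
    · omega
    · exact h
    · have := h.bounds
      omega

theorem span_right_iff : r.Span x y ↔ (node l r).Span (l.leaves + x) (l.leaves + y) := by
  have := l.one_le_leaves
  rw [span_node_iff]
  simp only [Nat.add_sub_cancel_left, le_add_iff_nonneg_right, zero_le, true_and]
  constructor
  · exact fun h => Or.inr (Or.inr h)
  · rintro (⟨h, -⟩ | h | h)
    · omega
    · have := h.bounds
      omega
    · exact h

theorem span_leaf : ¬ leaf.Span x y := fun h => by
  have := h.bounds
  simp only [leaves] at this
  omega

theorem span_node_root : (node l r).Span 0 (l.leaves + r.leaves) :=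
  span_node_iff.mpr (Or.inl ⟨rfl, rfl⟩)

theorem leaves_left_le {l' r' : PTree} (h : ∀ x y, (node l r).Span x y → (node l' r').Span x y)
    (hlr : l.leaves + r.leaves = l'.leaves + r'.leaves) : l.leaves ≤ l'.leaves := by
  have := r.one_le_leaves
  have := l'.one_le_leaves
  rcases Nat.lt_or_ge l.leaves 2 with hl | hl
  · omega
  rcases span_node_iff.mp (h 0 l.leaves (span_left_iff.mp (span_root hl)).2) with
    ⟨-, h⟩ | h | ⟨h, -⟩
  · omega
  · exact h.bounds.2
  · omega

theorem span_injective : Function.Injective Span := by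
  suffices ∀ P Q : PTree, (∀ x y, P.Span x y ↔ Q.Span x y) → P = Q from
    fun P Q h => this P Q fun x y => by rw [h]
  intro P
  induction P with
  | leaf =>
    rintro (_ | _) h
    · rfl
    · exact (span_leaf ((h _ _).mpr span_node_root)).elim
  | node l r ihl ihr =>
    rintro (_ | ⟨l', r'⟩) h
    · exact (span_leaf ((h _ _).mp span_node_root)).elim
    have hlr : l.leaves + r.leaves = l'.leaves + r'.leaves :=
      le_antisymm ((h _ _).mp span_node_root).bounds.2 ((h _ _).mpr span_node_root).bounds.2
    have hl : l.leaves = l'.leaves :=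
      le_antisymm (leaves_left_le (fun x y => (h x y).mp) hlr)
        (leaves_left_le (fun x y => (h x y).mpr) hlr.symm)
    have hl' : ∀ x y, l.Span x y ↔ l'.Span x y := fun x y => by
      rw [span_left_iff (r := r), span_left_iff (l := l') (r := r'), hl, h]
    have hr' : ∀ x y, r.Span x y ↔ r'.Span x y := fun x y => by
      rw [span_right_iff (l := l), span_right_iff (l := l') (r := r'), hl, h]
    rw [ihl l' hl', ihr r' hr']

theorem span_of_forall_not_cross (hxy : x + 2 ≤ y) (hy : y ≤ P.leaves)
    (h : ∀ x' y', P.Span x' y' → ¬ ChordsCross x y x' y') : P.Span x y := by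
  induction P generalizing x y with
  | leaf => simp only [leaves] at hy; omega
  | node l r ihl ihr =>
    have := l.one_le_leaves
    simp only [leaves] at hy
    by_cases hroot : x = 0 ∧ y = l.leaves + r.leaves
    · obtain ⟨rfl, rfl⟩ := hroot
      exact span_node_root
    rcases le_or_gt y l.leaves with hyl | hyl
    · exact (span_left_iff.mp (ihl hxy hyl fun x' y' hs => h x' y' (span_left_iff.mp hs).2)).2
    rcases le_or_gt l.leaves x with hxl | hxl
    · refine span_node_iff.mpr (Or.inr (Or.inr ⟨hxl, ihr (by omega) (by omega) ?_⟩))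
      intro x' y' hs hc
      exact h _ _ (span_right_iff.mp hs) (by unfold ChordsCross at hc ⊢; omega)
    -- `[x, y)` straddles the boundary between `l` and `r`, so it crosses the interval of `r`
    -- (if `x = 0`) or of `l` (if `0 < x`)
    exfalso
    rcases Nat.eq_zero_or_pos x with rfl | hx
    · refine h _ _ (span_right_iff.mp (span_root (P := r) (by omega))) ?_
      unfold ChordsCross
      omega
    · refine h _ _ (span_left_iff.mp (span_root (P := l) (by omega))).2 ?_
      unfold ChordsCross
      omega

theorem isMaximalLaminar_span {k : ℕ} (P : PTree) (hP : P.leaves = k) :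
    IsMaximalLaminar k P.Span :=
  hP ▸ ⟨fun _ _ => Span.bounds, fun _ _ _ _ => Span.not_cross,
    fun _ _ hxy hy => span_of_forall_not_cross hxy hy⟩

end PTree

namespace IsMaximalLaminar

variable {k m : ℕ} {F : ℕ → ℕ → Prop}

theorem root (hF : IsMaximalLaminar k F) (hk : 2 ≤ k) : F 0 k :=
  hF.maximal 0 k hk le_rfl fun x' y' h hc => by
    have := hF.bounds x' y' h
    unfold ChordsCross at hc
    omega

/-- The split point is the right end of the longest proper interval starting at `0`
(or `1` if there is none): it plays the role of the number of leaves of the left subtree. -/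
theorem exists_split (hF : IsMaximalLaminar k F) (hk : 2 ≤ k) :
    ∃ m, 1 ≤ m ∧ m < k ∧ ∀ x y, F x y → y ≤ m ∨ m ≤ x ∨ (x = 0 ∧ y = k) := by
  classical
  have hle := Nat.findGreatest_le (P := F 0) (k - 1)
  refine ⟨max 1 (Nat.findGreatest (F 0) (k - 1)), by omega, by omega, fun x y h => ?_⟩
  have := hF.bounds x y h
  by_contra! hc
  rcases Nat.eq_zero_or_pos x with rfl | hx
  · have := Nat.le_findGreatest (P := F 0) (n := k - 1) (m := y) (by omega) h
    omega
  · have hm : F 0 (Nat.findGreatest (F 0) (k - 1)) :=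
      Nat.findGreatest_of_ne_zero (n := k - 1) rfl (by omega)
    exact hF.noncross x y _ _ h hm (by unfold ChordsCross; omega)

theorem restrict_left (hF : IsMaximalLaminar k F) (hmk : m ≤ k)
    (hsplit : ∀ x y, F x y → y ≤ m ∨ m ≤ x ∨ (x = 0 ∧ y = k)) :
    IsMaximalLaminar m fun x y => F x y ∧ y ≤ m where
  bounds x y h := ⟨(hF.bounds x y h.1).1, h.2⟩
  noncross x y x' y' h h' := hF.noncross x y x' y' h.1 h'.1
  maximal x y hxy hy hmax := by
    refine ⟨hF.maximal x y hxy (by omega) fun x' y' h' hc => ?_, hy⟩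
    have := hF.bounds x' y' h'
    rcases hsplit x' y' h' with h₁ | h₁ | h₁
    · exact hmax x' y' ⟨h', h₁⟩ hc
    all_goals unfold ChordsCross at hc; omega

theorem restrict_right (hF : IsMaximalLaminar k F) (hmk : m ≤ k)
    (hsplit : ∀ x y, F x y → y ≤ m ∨ m ≤ x ∨ (x = 0 ∧ y = k)) :
    IsMaximalLaminar (k - m) fun x y => F (m + x) (m + y) where
  bounds x y h := by
    have := hF.bounds _ _ h
    omega
  noncross x y x' y' h h' hc := hF.noncross _ _ _ _ h h' (by unfold ChordsCross at hc ⊢; omega)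
  maximal x y hxy hy hmax := by
    refine hF.maximal _ _ (by omega) (by omega) fun x' y' h' hc => ?_
    have := hF.bounds x' y' h'
    rcases hsplit x' y' h' with h₁ | h₁ | h₁
    · unfold ChordsCross at hc; omega
    · refine hmax (x' - m) (y' - m) ?_ (by unfold ChordsCross at hc ⊢; omega)
      rwa [Nat.add_sub_cancel' h₁, Nat.add_sub_cancel' (by omega)]
    · unfold ChordsCross at hc; omega

theorem exists_span_eq (hk : 1 ≤ k) (hF : IsMaximalLaminar k F) :
    ∃ P : PTree, P.leaves = k ∧ ∀ x y, P.Span x y ↔ F x y := by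
  induction k using Nat.strong_induction_on generalizing F with
  | _ k ih =>
  rcases (show k = 1 ∨ 2 ≤ k by omega) with rfl | hk
  · refine ⟨.leaf, rfl, fun x y => iff_of_false PTree.span_leaf fun h => ?_⟩
    have := hF.bounds x y h
    omega
  obtain ⟨m, hm, hmk, hsplit⟩ := hF.exists_split hk
  obtain ⟨P₁, hP₁, h₁⟩ := ih m hmk hm (hF.restrict_left hmk.le hsplit)
  obtain ⟨P₂, hP₂, h₂⟩ := ih (k - m) (by omega) (by omega) (hF.restrict_right hmk.le hsplit)
  refine ⟨.node P₁ P₂, by simp only [PTree.leaves]; omega, fun x y => ?_⟩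
  rw [PTree.span_node_iff, h₁, h₂, hP₁, hP₂]
  constructor
  · rintro (⟨rfl, rfl⟩ | ⟨h, -⟩ | ⟨hx, h⟩)
    · rw [Nat.add_sub_cancel' hmk.le]
      exact hF.root hk
    · exact h
    · have := hF.bounds _ _ h
      rwa [Nat.add_sub_cancel' hx, Nat.add_sub_cancel' (by omega)] at h
  · intro h
    have := hF.bounds x y h
    rcases hsplit x y h with h' | h' | ⟨rfl, rfl⟩
    · exact Or.inr (Or.inl ⟨h, h'⟩)
    · refine Or.inr (Or.inr ⟨h', ?_⟩)
      rwa [Nat.add_sub_cancel' h', Nat.add_sub_cancel' (by omega)]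
    · exact Or.inl ⟨rfl, by omega⟩

end IsMaximalLaminar

noncomputable def PTree.spanEquiv {n : ℕ} (hn : 1 ≤ n) :
    {P : PTree // P.leaves = n} ≃ {F : ℕ → ℕ → Prop // IsMaximalLaminar n F} :=
  Equiv.ofBijective (fun P => ⟨P.1.Span, P.1.isMaximalLaminar_span P.2⟩)
    ⟨fun _ _ h => Subtype.ext (PTree.span_injective (congrArg Subtype.val h)), fun F => by
      obtain ⟨P, hP, h⟩ := F.2.exists_span_eq hn
      exact ⟨⟨P, hP⟩, Subtype.ext (funext₂ fun x y => propext (h x y))⟩⟩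

section Polygon

open Fin.NatCast

variable {n x y x' y' : ℕ}

def chord (n x y : ℕ) : Sym2 (Fin (n + 1)) := s((x : Fin (n + 1)), (y : Fin (n + 1)))

theorem chord_eq_iff (hx : x ≤ n) (hy : y ≤ n) {a b : Fin (n + 1)} :
    chord n x y = s(a, b) ↔ (a.val = x ∧ b.val = y) ∨ (a.val = y ∧ b.val = x) := by
  simp (disch := omega) only [chord, Sym2.eq_iff, Fin.ext_iff, Fin.val_natCast, Nat.mod_eq_of_lt]
  omega

theorem chord_inj (hxy : x < y) (hy : y ≤ n) (hxy' : x' < y') (hy' : y' ≤ n) :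
    chord n x y = chord n x' y' ↔ x = x' ∧ y = y' := by
  simp (disch := omega) only [chord, Sym2.eq_iff, Fin.ext_iff, Fin.val_natCast, Nat.mod_eq_of_lt]
  omega

theorem IsDiag.exists_chord {d : Sym2 (Fin (n + 1))} (h : IsDiag (n + 1) d) :
    ∃ x y, x < y ∧ y ≤ n ∧ d = chord n x y := by
  obtain ⟨a, b, rfl, hab, -⟩ := h
  rcases lt_or_gt_of_ne (Fin.val_injective.ne hab) with h | h
  · exact ⟨a, b, h, by omega, ((chord_eq_iff (by omega) (by omega)).mpr (Or.inl ⟨rfl, rfl⟩)).symm⟩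
  · exact ⟨b, a, h, by omega, ((chord_eq_iff (by omega) (by omega)).mpr (Or.inr ⟨rfl, rfl⟩)).symm⟩

theorem succ_mod_ne_and_succ_mod_ne_iff (hxy : x < y) (hy : y ≤ n) :
    (x + 1) % (n + 1) ≠ y ∧ (y + 1) % (n + 1) ≠ x ↔ x + 2 ≤ y ∧ (x ≠ 0 ∨ y ≠ n) := by
  rw [Nat.mod_eq_of_lt (by omega : x + 1 < n + 1)]
  rcases hy.lt_or_eq with hy | rfl
  · rw [Nat.mod_eq_of_lt (by omega : y + 1 < n + 1)]
    omega
  · rw [Nat.mod_self]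
    omega

theorem isDiag_chord_iff (hxy : x < y) (hy : y ≤ n) :
    IsDiag (n + 1) (chord n x y) ↔ x + 2 ≤ y ∧ (x ≠ 0 ∨ y ≠ n) := by
  rw [← succ_mod_ne_and_succ_mod_ne_iff hxy hy]
  constructor
  · rintro ⟨a, b, hab, -, ha, hb⟩
    rcases (chord_eq_iff (by omega) hy).mp hab with ⟨hax, hby⟩ | ⟨hay, hbx⟩
    · rw [hax, hby] at ha hb
      exact ⟨ha, hb⟩
    · rw [hay, hbx] at ha hb
      exact ⟨hb, ha⟩
  · intro h
    refine ⟨x, y, rfl, ?_, ?_⟩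
    · simp (disch := omega) only [ne_eq, Fin.ext_iff, Fin.val_natCast, Nat.mod_eq_of_lt]
      omega
    · rwa [Fin.val_cast_of_lt (by omega : x < n + 1), Fin.val_cast_of_lt (by omega : y < n + 1)]

theorem crosses_chord_iff (hxy : x < y) (hy : y ≤ n) (hxy' : x' < y') (hy' : y' ≤ n) :
    Crosses (n + 1) (chord n x y) (chord n x' y') ↔ ChordsCross x y x' y' := by
  constructor
  · rintro (⟨a, b, c, d, h₁, h₂, hac, hcb, hbd⟩ | ⟨a, b, c, d, h₁, h₂, hac, hcb, hbd⟩) <;>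
      rw [chord_eq_iff (by omega) (by omega)] at h₁ h₂ <;>
      rw [Fin.lt_def] at hac hcb hbd <;>
      unfold ChordsCross <;> omega
  · have hlt : ∀ {a b : ℕ}, a ≤ n → b ≤ n → a < b → (a : Fin (n + 1)) < b := fun ha hb h => by
      simpa (disch := omega) only [Fin.lt_def, Fin.val_natCast, Nat.mod_eq_of_lt] using h
    rintro (⟨h₁, h₂, h₃⟩ | ⟨h₁, h₂, h₃⟩)
    · exact Or.inl ⟨x, y, x', y', rfl, rfl, hlt (by omega) (by omega) h₁,
        hlt (by omega) (by omega) h₂, hlt (by omega) (by omega) h₃⟩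
    · exact Or.inr ⟨x', y', x, y, rfl, rfl, hlt (by omega) (by omega) h₁,
        hlt (by omega) (by omega) h₂, hlt (by omega) (by omega) h₃⟩

end Polygon

namespace Triangulation

variable {n : ℕ}

theorem ext {T T' : Triangulation n} (h : T.diags = T'.diags) : T = T' := by
  cases T
  cases T'
  cases h
  rfl

/-- The diagonals `(x, y)`, `x < y`, of `T` together with the side `(0, n)`, which plays the
role of the root of the dual tree. -/
def family (T : Triangulation (n + 1)) (x y : ℕ) : Prop :=
  (x < y ∧ y ≤ n ∧ chord n x y ∈ T.diags) ∨ (x = 0 ∧ y = n)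

theorem mem_diags_iff (T : Triangulation (n + 1)) {d : Sym2 (Fin (n + 1))} :
    d ∈ T.diags ↔ ∃ x y, T.family x y ∧ (x ≠ 0 ∨ y ≠ n) ∧ d = chord n x y := by
  constructor
  · intro hd
    obtain ⟨x, y, hxy, hy, rfl⟩ := (T.isDiag d hd).exists_chord
    have hp := ((isDiag_chord_iff hxy hy).mp (T.isDiag _ hd)).2
    exact ⟨x, y, Or.inl ⟨hxy, hy, hd⟩, hp, rfl⟩
  · rintro ⟨x, y, ⟨-, -, hd⟩ | ⟨rfl, rfl⟩, hp, rfl⟩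
    · exact hd
    · omega

theorem isMaximalLaminar_family (hn : 2 ≤ n) (T : Triangulation (n + 1)) :
    IsMaximalLaminar n T.family where
  bounds x y := by
    rintro (⟨hxy, hy, hd⟩ | ⟨rfl, rfl⟩)
    · exact ⟨((isDiag_chord_iff hxy hy).mp (T.isDiag _ hd)).1, hy⟩
    · omega
  noncross x y x' y' := by
    rintro (⟨hxy, hy, hd⟩ | ⟨rfl, rfl⟩) (⟨hxy', hy', hd'⟩ | ⟨rfl, rfl⟩)
    · rw [← crosses_chord_iff hxy hy hxy' hy']
      exact T.noncross _ hd _ hd'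
    all_goals unfold ChordsCross; omega
  maximal x y hxy hy hmax := by
    by_cases hroot : x = 0 ∧ y = n
    · exact Or.inr hroot
    refine Or.inl ⟨by omega, hy, T.maximal _ ((isDiag_chord_iff (by omega) hy).mpr
      ⟨hxy, by omega⟩) fun e he => ?_⟩
    obtain ⟨x', y', hxy', hy', rfl⟩ := (T.isDiag e he).exists_chord
    rw [crosses_chord_iff (by omega) hy hxy' hy']
    exact hmax x' y' (Or.inl ⟨hxy', hy', he⟩)

noncomputable def ofMaximalLaminar {F : ℕ → ℕ → Prop} (hF : IsMaximalLaminar n F) :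
    Triangulation (n + 1) where
  diags := by
    classical
    exact Finset.univ.filter fun d => ∃ x y, F x y ∧ (x ≠ 0 ∨ y ≠ n) ∧ d = chord n x y
  isDiag := by
    simp only [Finset.mem_filter, Finset.mem_univ, true_and]
    rintro _ ⟨x, y, h, hp, rfl⟩
    have := hF.bounds x y h
    exact (isDiag_chord_iff (by omega) this.2).mpr ⟨this.1, hp⟩
  noncross := by
    simp only [Finset.mem_filter, Finset.mem_univ, true_and]
    rintro _ ⟨x, y, h, -, rfl⟩ _ ⟨x', y', h', -, rfl⟩
    have := hF.bounds x y h
    have := hF.bounds x' y' h'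
    rw [crosses_chord_iff (by omega) (by omega) (by omega) (by omega)]
    exact hF.noncross x y x' y' h h'
  maximal := by
    simp only [Finset.mem_filter, Finset.mem_univ, true_and]
    intro d hd hnc
    obtain ⟨x, y, hxy, hy, rfl⟩ := hd.exists_chord
    obtain ⟨hxy₂, hp⟩ := (isDiag_chord_iff hxy hy).mp hd
    refine ⟨x, y, hF.maximal x y hxy₂ hy fun x' y' h' hc => ?_, hp, rfl⟩
    have := hF.bounds x' y' h'
    by_cases hroot : x' = 0 ∧ y' = n
    · unfold ChordsCross at hc
      omega
    · exact hnc _ ⟨x', y', h', by omega, rfl⟩ ((crosses_chord_iff hxy hy (by omega) this.2).mpr hc)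

theorem mem_ofMaximalLaminar {F : ℕ → ℕ → Prop} {hF : IsMaximalLaminar n F}
    {d : Sym2 (Fin (n + 1))} :
    d ∈ (ofMaximalLaminar hF).diags ↔ ∃ x y, F x y ∧ (x ≠ 0 ∨ y ≠ n) ∧ d = chord n x y := by
  simp [ofMaximalLaminar]

theorem family_ofMaximalLaminar (hn : 2 ≤ n) {F : ℕ → ℕ → Prop} (hF : IsMaximalLaminar n F)
    (x y : ℕ) : (ofMaximalLaminar hF).family x y ↔ F x y := by
  simp only [family, mem_ofMaximalLaminar]
  constructor
  · rintro (⟨hxy, hy, x', y', h, -, he⟩ | ⟨rfl, rfl⟩)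
    · have := hF.bounds x' y' h
      obtain ⟨rfl, rfl⟩ := (chord_inj hxy hy (by omega) this.2).mp he
      exact h
    · exact hF.root hn
  · intro h
    have := hF.bounds x y h
    by_cases hroot : x = 0 ∧ y = n
    · exact Or.inr hroot
    · exact Or.inl ⟨by omega, this.2, x, y, h, by omega, rfl⟩

noncomputable def familyEquiv (hn : 2 ≤ n) :
    Triangulation (n + 1) ≃ {F : ℕ → ℕ → Prop // IsMaximalLaminar n F} where
  toFun T := ⟨T.family, T.isMaximalLaminar_family hn⟩
  invFun F := ofMaximalLaminar F.2
  left_inv T := ext <| Finset.ext fun d => by rw [mem_ofMaximalLaminar, mem_diags_iff]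
  right_inv F := Subtype.ext <| funext₂ fun x y => propext (family_ofMaximalLaminar hn F.2 x y)

theorem disjoint_diags_iff (T T' : Triangulation (n + 1)) :
    Disjoint T.diags T'.diags ↔ ∀ x y, T.family x y → T'.family x y → x = 0 ∧ y = n := by
  rw [Finset.disjoint_left]
  constructor
  · intro h x y hT hT'
    by_contra hp
    exact h (T.mem_diags_iff.mpr ⟨x, y, hT, by omega, rfl⟩)
      (T'.mem_diags_iff.mpr ⟨x, y, hT', by omega, rfl⟩)
  · intro h d hd hd'
    obtain ⟨x, y, ⟨hxy, hy, -⟩ | ⟨rfl, rfl⟩, hp, rfl⟩ := T.mem_diags_iff.mp hd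
    · have := h x y (Or.inl ⟨hxy, hy, hd⟩) (Or.inl ⟨hxy, hy, hd'⟩)
      omega
    · omega

end Triangulation

theorem irredLayout_iff {P Q : PTree} :
    IrredLayout (P, Q) ↔ ∀ x y, P.Span x y → Q.Span x y → x = 0 ∧ y = P.leaves := by
  dsimp only [IrredLayout]
  constructor
  · rintro h x y ⟨u, hu, rfl, h2⟩ ⟨v, hv, hyv, -⟩
    have := hu.add_leaves_le
    by_contra hp
    exact h ⟨x, u, v, hu, hv, by omega, h2, by omega⟩
  · rintro h ⟨a, u, v, hu, hv, huv, h2, hlt⟩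
    have := h a (a + u.leaves) ⟨u, hu, rfl, h2⟩ ⟨v, hv, by omega, by omega⟩
    omega

/-- For any `n ≥ 2` there is a bijection between planar
layouts of irreducible planar tanglegrams of size `n` (pairs of plane binary
trees with `n` leaves, matching by position, with no proper subtanglegram)
and ordered pairs of triangulations of a convex `(n+1)`-gon sharing no
diagonal. -/
theorem layouts_equiv_disjoint_triangulations (n : ℕ) (hn : 2 ≤ n) :
    Nonempty
      ({p : PTree × PTree // p.1.leaves = n ∧ p.2.leaves = n ∧ IrredLayout p} ≃
        {q : Triangulation (n + 1) × Triangulation (n + 1) //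
          Disjoint q.1.diags q.2.diags}) := by
  let e : {P : PTree // P.leaves = n} ≃ Triangulation (n + 1) :=
    (PTree.spanEquiv (by omega)).trans (Triangulation.familyEquiv hn).symm
  have family_e (P : {P : PTree // P.leaves = n}) : (e P).family = P.1.Span :=
    congrArg Subtype.val ((Triangulation.familyEquiv hn).apply_symm_apply _)
  let layouts : {p : PTree × PTree // p.1.leaves = n ∧ p.2.leaves = n ∧ IrredLayout p} ≃
      {q : {P : PTree // P.leaves = n} × {P : PTree // P.leaves = n} //
        IrredLayout (q.1.1, q.2.1)} :=
    { toFun p := ⟨(⟨p.1.1, p.2.1⟩, ⟨p.1.2, p.2.2.1⟩), p.2.2.2⟩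
      invFun q := ⟨(q.1.1.1, q.1.2.1), q.1.1.2, q.1.2.2, q.2⟩ }
  refine ⟨layouts.trans (Equiv.subtypeEquiv (e.prodCongr e) fun q => ?_)⟩
  rw [irredLayout_iff, Triangulation.disjoint_diags_iff, q.1.2]
  simp only [Equiv.prodCongr_apply, Prod.map, family_e]
end

section
/- Under the plane-dual Catalan bijection between rooted plane binary trees with n leaves and triangulations of a convex (n+1)-gon, a planar tanglegram layout (P1, P2) contains a proper subtanglegram if and only if the corresponding pair of triangulations (T1, T2) of the (n+1)-gon shares a diagonal. -/
lemma PTree.one_le_leaves_s16 (t : PTree) : 1 ≤ t.leaves := by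
  induction t with
  | leaf => simp [PTree.leaves]
  | node l r hl hr => simp [PTree.leaves]; omega

lemma subAt_le {t u : PTree} {b : ℕ} (h : SubAt t b u) : b + u.leaves ≤ t.leaves := by
  induction h with
  | refl t => simp
  | left r _ ih => simp [PTree.leaves]; omega
  | right l _ ih => simp [PTree.leaves]; omega

lemma subAt_eq_or_lt {t u : PTree} {b : ℕ} (h : SubAt t b u) :
    u = t ∨ u.leaves < t.leaves := by
  induction h with
  | refl t => exact Or.inl rfl
  | @left l u a r _ ih =>
      right
      have := r.one_le_leaves_s16
      rcases ih with rfl | h' <;> simp [PTree.leaves] <;> omega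
  | @right l r u a _ ih =>
      right
      have := l.one_le_leaves_s16
      rcases ih with rfl | h' <;> simp [PTree.leaves] <;> omega

lemma mem_dualAux {P : PTree} {a : ℕ} {d : Sym2 ℕ} :
    d ∈ P.dualAux a ↔
      ∃ b u, SubAt P b u ∧ 2 ≤ u.leaves ∧ u.leaves < P.leaves ∧
        d = s(a + b, a + b + u.leaves) := by
  induction P generalizing a with
  | leaf =>
      simp only [PTree.dualAux, Finset.notMem_empty, false_iff]
      rintro ⟨b, u, hs, h2, hlt, -⟩
      have := subAt_le hs
      simp [PTree.leaves] at hlt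
      omega
  | node l r ihl ihr =>
      constructor
      · intro hd
        simp only [PTree.dualAux, Finset.mem_union] at hd
        have hl1 := l.one_le_leaves_s16
        have hr1 := r.one_le_leaves_s16
        rcases hd with ((hd | hd) | hd) | hd
        · obtain ⟨b, u, hs, h2, hlt, hde⟩ := ihl.mp hd
          exact ⟨b, u, SubAt.left r hs, h2, by simp [PTree.leaves]; omega, hde⟩
        · obtain ⟨b, u, hs, h2, hlt, hde⟩ := ihr.mp hd
          refine ⟨l.leaves + b, u, SubAt.right l hs, h2,
            by simp [PTree.leaves]; omega, ?_⟩
          rw [hde]; ring_nf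
        · split at hd
          · simp at hd
            refine ⟨0, l, SubAt.left r (SubAt.refl l), by assumption,
              by simp [PTree.leaves]; omega, by simpa using hd⟩
          · simp at hd
        · split at hd
          · simp at hd
            refine ⟨l.leaves, r, by simpa using SubAt.right l (SubAt.refl r),
              by assumption, by simp [PTree.leaves]; omega, ?_⟩
            rw [hd]
          · simp at hd
      · rintro ⟨b, u, hs, h2, hlt, hde⟩
        simp only [PTree.dualAux, Finset.mem_union]
        have hl1 := l.one_le_leaves_s16
        have hr1 := r.one_le_leaves_s16
        cases hs with
        | refl => simp [PTree.leaves] at hlt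
        | @left l u b r hs =>
            rcases subAt_eq_or_lt hs with rfl | hlt'
            · have hb : b = 0 := by have := subAt_le hs; omega
              subst hb
              left; right
              rw [if_pos h2]
              simp [hde]
            · left; left; left
              exact ihl.mpr ⟨b, u, hs, h2, hlt', hde⟩
        | @right l r u b hs =>
            rcases subAt_eq_or_lt hs with rfl | hlt'
            · have hb : b = 0 := by have := subAt_le hs; omega
              subst hb
              right
              rw [if_pos h2]
              simp [hde]
            · left; left; right
              refine ihr.mpr ⟨b, u, hs, h2, hlt', ?_⟩
              rw [hde]; ring_nf

/-- Under the plane-dual Catalan bijection, a planar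
tanglegram layout `(P₁, P₂)` (plane binary trees with `n` leaves, matched by
position) contains a proper subtanglegram if and only if the corresponding
pair of triangulations of the `(n+1)`-gon shares a diagonal. -/
theorem properSub_iff_shared_diagonal (n : ℕ) (p : PTree × PTree)
    (h1 : p.1.leaves = n) (h2 : p.2.leaves = n) :
    (∃ (a : ℕ) (u v : PTree), SubAt p.1 a u ∧ SubAt p.2 a v ∧
        u.leaves = v.leaves ∧ 2 ≤ u.leaves ∧ u.leaves < n) ↔
      ∃ d, d ∈ p.1.dual ∧ d ∈ p.2.dual := by
  constructor
  · rintro ⟨a, u, v, hu, hv, heq, h2u, hlt⟩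
    refine ⟨s(a, a + u.leaves), ?_, ?_⟩
    · exact mem_dualAux.mpr ⟨a, u, hu, h2u, by omega, by simp⟩
    · exact mem_dualAux.mpr ⟨a, v, hv, by omega, by omega, by simp [heq]⟩
  · rintro ⟨d, hd1, hd2⟩
    obtain ⟨b, u, hsu, h2u, hltu, hdu⟩ := mem_dualAux.mp hd1
    obtain ⟨c, v, hsv, h2v, hltv, hdv⟩ := mem_dualAux.mp hd2
    simp only [Nat.zero_add] at hdu hdv
    rw [hdu, Sym2.eq, Sym2.rel_iff', Prod.mk.injEq, Prod.swap_prod_mk,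
      Prod.mk.injEq] at hdv
    rcases hdv with ⟨rfl, he⟩ | ⟨he1, he2⟩
    · exact ⟨b, u, v, hsu, hsv, by omega, h2u, by omega⟩
    · omega
end
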